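/- arXiv:1711.02319 — 5 statements merged into one kernel-verified Lean document; each statement's English description precedes it below -/
import Mathlib

section
/- The determinant of the L×L circulant tridiagonal matrix R_L with diagonal entries A, superdiagonal entries B, subdiagonal entries C, and corner entries C (top-right) and B (bottom-left) equals ξ₊^L + ξ₋^L − (−B)^L − (−C)^L, where ξ± = (A ± √(A²−4BC))/2. -/
/-!
`R_L` is the circulant matrix of the vector with `A, C, B` at positions `0, 1, -1`. Conjugating by
the Vandermonde matrix of the `L`-th roots of unity diagonalises it, so its determinant is
`∏_ζ (A + C ζ + B ζ⁻¹)`. Since `A = ξ₊ + ξ₋` and `BC = ξ₊ξ₋`, each factor satisfies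
`ξ₊ (A + C ζ + B ζ⁻¹) = (ξ₊ + C ζ)(ξ₊ + B ζ⁻¹)`, and `∏_ζ (u - v ζ) = u^L - v^L` evaluates both
products. Dividing by `ξ₊^L` is legitimate when `BC ≠ 0`; when `B` or `C` vanishes the factors
are linear in `ζ` and the same product formula applies directly.
-/

open Finset Matrix

theorem Fin.eq_add_one_iff_val {n : ℕ} [NeZero n] (hn : 1 < n) {i j : Fin n} :
    i = j + 1 ↔ i.val = j.val + 1 ∨ (i.val = 0 ∧ j.val = n - 1) := by
  rw [Fin.ext_iff, Fin.val_add_eq_ite, Fin.val_one', Nat.mod_eq_of_lt hn]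
  split_ifs <;> omega

theorem pow_val_add_of_pow_eq_one {M : Type*} [Monoid M] {n : ℕ} {ζ : M} (hζ : ζ ^ n = 1)
    (a b : Fin n) : ζ ^ (a + b).val = ζ ^ a.val * ζ ^ b.val := by
  rw [Fin.val_add, ← pow_eq_pow_mod _ hζ, pow_add]

section Circulant

variable {R : Type*} [CommRing R] {n : ℕ} [NeZero n]

theorem Matrix.vandermonde_mul_circulant {ζ : Fin n → R} (hζ : ∀ k, ζ k ^ n = 1) (w : Fin n → R) :
    vandermonde ζ * circulant w =
      diagonal (fun k => ∑ m, w m * ζ k ^ m.val) * vandermonde ζ := by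
  ext k j
  rw [mul_apply, diagonal_mul, vandermonde_apply, sum_mul, ← Equiv.sum_comp (Equiv.addRight j)]
  refine sum_congr rfl fun m _ => ?_
  rw [vandermonde_apply, circulant_apply, Equiv.coe_addRight, add_sub_cancel_right,
    pow_val_add_of_pow_eq_one (hζ k)]
  ring

theorem Matrix.det_circulant [IsDomain R] {ζ : Fin n → R} (hinj : Function.Injective ζ)
    (hζ : ∀ k, ζ k ^ n = 1) (w : Fin n → R) :
    (circulant w).det = ∏ k, ∑ m, w m * ζ k ^ m.val := by
  have h := congrArg det (vandermonde_mul_circulant hζ w)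
  rw [det_mul, det_mul, det_diagonal] at h
  exact mul_left_cancel₀ (det_vandermonde_ne_zero_iff.2 hinj) (h.trans (mul_comm _ _))

end Circulant

theorem Matrix.circulant_single_add_single_add_single_apply {R : Type*} [AddZeroClass R]
    {n : ℕ} [NeZero n] (hn : 2 < n) (a b c : R) (i j : Fin n) :
    circulant (Pi.single 0 a + Pi.single 1 c + Pi.single (-1) b : Fin n → R) i j =
      if (i : ℕ) = (j : ℕ) then a
        else if (i : ℕ) + 1 = (j : ℕ) then b
        else if (j : ℕ) + 1 = (i : ℕ) then c
        else if (i : ℕ) = 0 ∧ (j : ℕ) = n - 1 then c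
        else if (i : ℕ) = n - 1 ∧ (j : ℕ) = 0 then b
        else 0 := by
  have h0 : i - j = 0 ↔ (i : ℕ) = j := by rw [sub_eq_zero, Fin.ext_iff]
  have h1 : i - j = 1 ↔ (j : ℕ) + 1 = i ∨ ((i : ℕ) = 0 ∧ (j : ℕ) = n - 1) := by
    rw [sub_eq_iff_eq_add, add_comm, Fin.eq_add_one_iff_val (by omega)]; omega
  have h2 : i - j = -1 ↔ (i : ℕ) + 1 = j ∨ ((i : ℕ) = n - 1 ∧ (j : ℕ) = 0) := by
    rw [← neg_sub, neg_inj, sub_eq_iff_eq_add, add_comm, Fin.eq_add_one_iff_val (by omega)]; omega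
  simp only [circulant_apply, Pi.add_apply, Pi.single_apply, h0, h1, h2]
  split_ifs <;> first | omega | simp only [add_zero, zero_add]

theorem sum_single_add_single_add_single_mul_pow {K : Type*} [DivisionRing K] {n : ℕ} [NeZero n]
    (hn : 1 < n) {ζ : K} (hζ : ζ ^ n = 1) (a b c : K) :
    ∑ m : Fin n, (Pi.single 0 a + Pi.single 1 c + Pi.single (-1) b : Fin n → K) m * ζ ^ m.val =
      a + c * ζ + b * ζ⁻¹ := by
  have h1 : ((1 : Fin n) : ℕ) = 1 := by rw [Fin.val_one', Nat.mod_eq_of_lt hn]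
  have hneg : ((-1 : Fin n) : ℕ) = n - 1 := by
    rw [Fin.val_neg, if_neg (by rw [Fin.ext_iff, h1, Fin.val_zero]; omega), h1]
  have hinv : ζ ^ (n - 1) = ζ⁻¹ := by
    refine (eq_inv_of_mul_eq_one_left ?_)
    rw [← pow_succ, Nat.sub_add_cancel (by omega), hζ]
  simp only [Pi.add_apply, add_mul, sum_add_distrib, Pi.single_apply, ite_mul, zero_mul,
    sum_ite_eq', mem_univ, if_true, Fin.val_zero, pow_zero, mul_one, h1, pow_one, hneg, hinv]

theorem IsPrimitiveRoot.prod_sub_mul_pow {R : Type*} [CommRing R] [IsDomain R] {ω : R} {n : ℕ}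
    (hω : IsPrimitiveRoot ω n) (hn : 0 < n) (u v : R) :
    ∏ k ∈ range n, (u - v * ω ^ k) = u ^ n - v ^ n := by
  have : NeZero n := ⟨hn.ne'⟩
  rw [hω.pow_sub_pow_eq_prod_sub_mul u v hn]
  refine prod_nbij (ω ^ ·) (fun k _ => ?_) hω.injOn_pow (fun ζ hζ => ?_)
    fun k _ => by rw [mul_comm v]
  · exact (Polynomial.mem_nthRootsFinset hn 1).2 (by rw [pow_right_comm, hω.pow_eq_one, one_pow])
  · obtain ⟨k, hk, rfl⟩ := hω.eq_pow_of_pow_eq_one ((Polynomial.mem_nthRootsFinset hn 1).1 hζ)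
    exact ⟨k, by simpa using hk, rfl⟩

section RootsOfUnity

variable {K : Type*} [Field K] {ω : K} {n : ℕ} {a b c x y : K}

theorem prod_add_mul_pow_of_mul_eq_zero (hω : IsPrimitiveRoot ω n) (hn : 0 < n)
    (hsum : x + y = a) (hprod : x * y = 0) :
    ∏ k ∈ range n, (a + b * ω ^ k) = x ^ n + y ^ n - (-b) ^ n := by
  have hpow : x ^ n + y ^ n = a ^ n := by
    rcases mul_eq_zero.1 hprod with rfl | rfl
    · rw [zero_pow hn.ne', zero_add, ← hsum, zero_add]
    · rw [zero_pow hn.ne', add_zero, ← hsum, add_zero]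
  rw [hpow, ← hω.prod_sub_mul_pow hn]
  simp only [neg_mul, sub_neg_eq_add]

theorem prod_add_mul_pow_add_mul_inv_pow_of_ne_zero (hω : IsPrimitiveRoot ω n) (hn : 0 < n)
    (hsum : x + y = a) (hprod : x * y = b * c) (hx : x ≠ 0) :
    ∏ k ∈ range n, (a + b * ω ^ k + c * (ω ^ k)⁻¹) = x ^ n + y ^ n - (-b) ^ n - (-c) ^ n := by
  have hfactor : ∀ k, x * (a + b * ω ^ k + c * (ω ^ k)⁻¹) =
      (x - -b * ω ^ k) * (x - -c * ω⁻¹ ^ k) := fun k => by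
    have hk : ω ^ k * (ω ^ k)⁻¹ = 1 := mul_inv_cancel₀ (pow_ne_zero k (hω.ne_zero hn.ne'))
    rw [inv_pow]
    linear_combination x * hsum.symm + hprod - b * c * hk
  apply mul_left_cancel₀ (pow_ne_zero n hx)
  calc x ^ n * ∏ k ∈ range n, (a + b * ω ^ k + c * (ω ^ k)⁻¹)
      = ∏ k ∈ range n, (x - -b * ω ^ k) * (x - -c * ω⁻¹ ^ k) := by
        simp_rw [← hfactor]
        rw [prod_mul_distrib, prod_const, card_range]
    _ = (x ^ n - (-b) ^ n) * (x ^ n - (-c) ^ n) := by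
        rw [prod_mul_distrib, hω.prod_sub_mul_pow hn, hω.inv.prod_sub_mul_pow hn]
    _ = x ^ n * (x ^ n + y ^ n - (-b) ^ n - (-c) ^ n) := by
        have hbc : x ^ n * y ^ n = (-b) ^ n * (-c) ^ n := by
          rw [← mul_pow, ← mul_pow, hprod, neg_mul_neg]
        -- keep `ring` from splitting `(-b) ^ n` into `(-1) ^ n * b ^ n`
        generalize (-b) ^ n = p, (-c) ^ n = q at hbc ⊢
        linear_combination -hbc

theorem prod_add_mul_pow_add_mul_inv_pow (hω : IsPrimitiveRoot ω n) (hn : 0 < n)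
    (hsum : x + y = a) (hprod : x * y = b * c) :
    ∏ k ∈ range n, (a + b * ω ^ k + c * (ω ^ k)⁻¹) = x ^ n + y ^ n - (-b) ^ n - (-c) ^ n := by
  rcases eq_or_ne c 0 with rfl | hc
  · rw [mul_zero] at hprod
    simpa [zero_pow hn.ne'] using prod_add_mul_pow_of_mul_eq_zero (b := b) hω hn hsum hprod
  rcases eq_or_ne b 0 with rfl | hb
  · rw [zero_mul] at hprod
    simpa [zero_pow hn.ne', inv_pow] using
      prod_add_mul_pow_of_mul_eq_zero (b := c) hω.inv hn hsum hprod
  exact prod_add_mul_pow_add_mul_inv_pow_of_ne_zero hω hn hsum hprod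
    (left_ne_zero_of_mul (hprod ▸ mul_ne_zero hb hc))

end RootsOfUnity

/-- Determinant of the L×L circulant tridiagonal matrix with diagonal A,
superdiagonal B, subdiagonal C and corner entries C (top-right), B (bottom-left). -/
theorem circulant_tridiagonal_det (L : ℕ) (hL : 3 ≤ L) (A B C ξp ξm : ℂ)
    (hsum : ξp + ξm = A) (hprod : ξp * ξm = B * C)
    (R : Matrix (Fin L) (Fin L) ℂ)
    (hR : ∀ i j : Fin L,
      R i j = if (i : ℕ) = (j : ℕ) then A
        else if (i : ℕ) + 1 = (j : ℕ) then B
        else if (j : ℕ) + 1 = (i : ℕ) then C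
        else if (i : ℕ) = 0 ∧ (j : ℕ) = L - 1 then C
        else if (i : ℕ) = L - 1 ∧ (j : ℕ) = 0 then B
        else 0) :
    R.det = ξp ^ L + ξm ^ L - (-B) ^ L - (-C) ^ L := by
  have : NeZero L := ⟨by omega⟩
  obtain ⟨ω, hω⟩ : ∃ ω : ℂ, IsPrimitiveRoot ω L := ⟨_, Complex.isPrimitiveRoot_exp L (by omega)⟩
  have hcirc : R = circulant (Pi.single 0 A + Pi.single 1 C + Pi.single (-1) B : Fin L → ℂ) :=
    Matrix.ext fun i j =>
      (hR i j).trans (circulant_single_add_single_add_single_apply (by omega) A B C i j).symm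
  have hroot : ∀ k : Fin L, (ω ^ k.val) ^ L = 1 := fun k => by
    rw [pow_right_comm, hω.pow_eq_one, one_pow]
  rw [hcirc, det_circulant (ζ := fun k : Fin L => ω ^ k.val)
    (fun i j h => Fin.ext (hω.pow_inj i.2 j.2 h)) hroot]
  simp only [sum_single_add_single_add_single_mul_pow (by omega) (hroot _)]
  rw [Fin.prod_univ_eq_prod_range (fun k => A + C * ω ^ k + B * (ω ^ k)⁻¹),
    prod_add_mul_pow_add_mul_inv_pow hω (by omega) hsum (hprod.trans (mul_comm B C))]
  ring
end

section
/- For a banded matrix R with band width r (R(x,y) = 0 whenever |x−y| > r) whose inverse exists with u ≤ R†R ≤ v (0 < u ≤ v), the entries of (R†R)^{-1} decay exponentially: |(R†R)^{-1}(x,y)| ≤ C e^{−ρ|x−y|} for constants C, ρ > 0 depending only on u, v, r. -/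
/-!
Put `A = R†R` and `B = 1 - c A` with `c = 2/(u+v)`. Then `A` is banded of width `2r` and the
spectrum of `B` lies in `[-κ, κ]` with `κ = (v-u)/(u+v) < 1`. For every `k`,
`A⁻¹ = c ∑_{j<k} B^j + A⁻¹ B^k`; the polynomial part is banded of width `2r(k-1)`, so with
`k = ⌈d/(2r)⌉` only the remainder contributes at distance `d`, and its entries are bounded by its
operator norm `sup_{λ ∈ [u,v]} λ⁻¹ |1 - cλ|^k ≤ κ^k / u`. The rate uses `v/(u+v) ≥ κ`, which stays
positive also when `u = v`.
-/

open Matrix Unitary Finset Real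
open scoped Matrix.Norms.L2Operator ComplexOrder

theorem abs_one_sub_two_div_add_mul_le {u v x : ℝ} (hu : 0 < u) (hux : u ≤ x) (hxv : x ≤ v) :
    |1 - 2 / (u + v) * x| ≤ (v - u) / (u + v) := by
  have huv : 0 < u + v := by linarith
  rw [abs_le, ← neg_div, le_div_iff₀ huv, div_le_iff₀ huv]
  constructor <;> field_simp <;> linarith

theorem pow_le_exp_log_mul {q t : ℝ} (hq0 : 0 < q) (hq1 : q ≤ 1) {k : ℕ} (hk : t ≤ k) :
    q ^ k ≤ exp (log q * t) := by
  rw [← rpow_natCast, ← rpow_def_of_pos hq0]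
  exact rpow_le_rpow_of_exponent_ge hq0 hq1 hk

theorem exists_nat_div_le_and_sub_one_mul_lt {d b : ℤ} (hd : 0 ≤ d) (hb : 0 < b) :
    ∃ k : ℕ, (d : ℝ) / b ≤ k ∧ ((k : ℤ) - 1) * b < d := by
  refine ⟨⌈(d : ℝ) / b⌉₊, Nat.le_ceil _, ?_⟩
  have h := Nat.ceil_lt_add_one (by positivity : (0 : ℝ) ≤ d / b)
  rw [← sub_lt_iff_lt_add, lt_div_iff₀ (by exact_mod_cast hb)] at h
  exact_mod_cast h

theorem eq_smul_sum_pow_add_mul_pow {α R : Type*} [CommRing α] [Ring R] [Algebra α R]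
    {a a' : R} (h : a' * a = 1) (c : α) (k : ℕ) :
    a' = c • ∑ j ∈ range k, (1 - c • a) ^ j + a' * (1 - c • a) ^ k := by
  have : a' * (1 - (1 - c • a) ^ k) = c • ∑ j ∈ range k, (1 - c • a) ^ j := by
    rw [← mul_neg_geom_sum, sub_sub_cancel, ← mul_assoc, mul_smul_comm, h, smul_mul_assoc, one_mul]
  rw [← this, mul_sub, mul_one, sub_add_cancel]

def Matrix.IsBanded {α : Type*} [Zero α] {M : ℕ} (A : Matrix (Fin M) (Fin M) α) (b : ℤ) : Prop :=
  ∀ x y : Fin M, b < |(x : ℤ) - (y : ℤ)| → A x y = 0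

namespace Matrix.IsBanded

variable {α : Type*} {M : ℕ} {A B : Matrix (Fin M) (Fin M) α} {a b : ℤ}

theorem mono [Zero α] (hA : A.IsBanded a) (hab : a ≤ b) : A.IsBanded b :=
  fun x y h ↦ hA x y (hab.trans_lt h)

theorem one [Zero α] [One α] (hb : 0 ≤ b) : (1 : Matrix (Fin M) (Fin M) α).IsBanded b := by
  intro x y h
  refine one_apply_ne fun hxy ↦ ?_
  subst hxy
  simp only [sub_self, abs_zero] at h
  omega

theorem conjTranspose [AddMonoid α] [StarAddMonoid α] (hA : A.IsBanded b) : Aᴴ.IsBanded b := by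
  intro x y h
  rw [conjTranspose_apply, hA y x (by rwa [abs_sub_comm]), star_zero]

theorem sub [AddGroup α] (hA : A.IsBanded b) (hB : B.IsBanded b) : (A - B).IsBanded b := by
  intro x y h
  rw [sub_apply, hA x y h, hB x y h, sub_zero]

theorem smul {S : Type*} [Zero α] [SMulZeroClass S α] (hA : A.IsBanded b) (c : S) : (c • A).IsBanded b := by
  intro x y h
  rw [smul_apply, hA x y h, smul_zero]

theorem sum [AddCommMonoid α] {ι : Type*} {s : Finset ι} {f : ι → Matrix (Fin M) (Fin M) α}
    (hf : ∀ i ∈ s, (f i).IsBanded b) : (∑ i ∈ s, f i).IsBanded b := by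
  intro x y h
  rw [Matrix.sum_apply]
  exact Finset.sum_eq_zero fun i hi ↦ hf i hi x y h

theorem mul [NonUnitalNonAssocSemiring α] (hA : A.IsBanded a) (hB : B.IsBanded b) :
    (A * B).IsBanded (a + b) := by
  intro x y h
  rw [mul_apply]
  refine Finset.sum_eq_zero fun z _ ↦ ?_
  by_cases hxz : a < |(x : ℤ) - (z : ℤ)|
  · rw [hA x z hxz, zero_mul]
  · have := abs_sub_le (x : ℤ) z y
    rw [hB z y (by omega), mul_zero]

theorem pow [Semiring α] (hA : A.IsBanded b) (j : ℕ) : (A ^ j).IsBanded (j * b) := by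
  induction j with
  | zero => simpa using one (α := α) (b := 0) le_rfl
  | succ j ih => simpa [pow_succ, add_mul] using ih.mul hA

theorem inv_apply_eq_inv_mul_pow_apply [CommRing α] (hA : A.IsBanded b) (hb : 0 ≤ b)
    (hinv : A⁻¹ * A = 1) (c : α) {k : ℕ} {x y : Fin M} (hk : ((k : ℤ) - 1) * b < |(x : ℤ) - y|) :
    A⁻¹ x y = (A⁻¹ * (1 - c • A) ^ k) x y := by
  have hB : (1 - c • A).IsBanded b := (one hb).sub (hA.smul c)
  have hsum : (c • ∑ j ∈ range k, (1 - c • A) ^ j).IsBanded (((k : ℤ) - 1) * b) :=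
    (IsBanded.sum fun j hj ↦ (hB.pow j).mono <|
      mul_le_mul_of_nonneg_right (by have := mem_range.mp hj; omega) hb).smul c
  conv_lhs => rw [eq_smul_sum_pow_add_mul_pow hinv c k]
  rw [add_apply, hsum x y hk, zero_add]

end Matrix.IsBanded

section Spectral

variable {𝕜 m n : Type*} [RCLike 𝕜] [Fintype m] [Fintype n] [DecidableEq n]

theorem Matrix.norm_apply_le_l2_opNorm (A : Matrix m n 𝕜) (i : m) (j : n) : ‖A i j‖ ≤ ‖A‖ := by
  have h := A.l2_opNorm_mulVec (PiLp.single 2 j 1)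
  rw [PiLp.norm_single, norm_one, mul_one] at h
  refine le_trans (le_of_eq ?_) ((PiLp.norm_apply_le _ i).trans h)
  simp

theorem Matrix.l2_opNorm_conjStarAlgAut_diagonal_le (U : unitary (Matrix n n 𝕜)) {d : n → 𝕜}
    {b : ℝ} (hb : 0 ≤ b) (hd : ∀ i, ‖d i‖ ≤ b) :
    ‖conjStarAlgAut 𝕜 _ U (diagonal d)‖ ≤ b := by
  rw [conjStarAlgAut_apply, ← coe_star, CStarRing.norm_mul_coe_unitary,
    CStarRing.norm_coe_unitary_mul, l2_opNorm_diagonal]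
  exact (pi_norm_le_iff_of_nonneg hb).mpr hd

theorem Matrix.IsHermitian.inv_mul_one_sub_smul_pow {A : Matrix n n 𝕜} (hA : A.IsHermitian)
    (h0 : ∀ i, hA.eigenvalues i ≠ 0) (c : ℝ) (k : ℕ) :
    A⁻¹ * (1 - (c : 𝕜) • A) ^ k = hA.cfc (fun x ↦ x⁻¹ * (1 - c * x) ^ k) := by
  let Φ := (conjStarAlgAut 𝕜 _ hA.eigenvectorUnitary).toAlgEquiv.toAlgHom.comp (diagonalAlgHom 𝕜)
  let g : n → 𝕜 := RCLike.ofReal ∘ hA.eigenvalues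
  have hAg : A = Φ g := hA.spectral_theorem
  have hinv : A⁻¹ = Φ g⁻¹ := by
    refine inv_eq_right_inv ?_
    rw [hAg, ← map_mul, ← map_one Φ]
    congr 1
    funext i
    exact mul_inv_cancel₀ (by simpa [g] using h0 i)
  calc A⁻¹ * (1 - (c : 𝕜) • A) ^ k = Φ (g⁻¹ * (1 - (c : 𝕜) • g) ^ k) := by
        rw [hinv, hAg, map_mul, map_pow, map_sub, map_smul, map_one]
    _ = hA.cfc (fun x ↦ x⁻¹ * (1 - c * x) ^ k) := by
        change conjStarAlgAut 𝕜 _ _ (diagonal _) = conjStarAlgAut 𝕜 _ _ (diagonal _)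
        congr 2
        funext i
        simp [g]

theorem Matrix.IsHermitian.norm_inv_mul_pow_apply_le {A : Matrix n n 𝕜} (hA : A.IsHermitian)
    {u v : ℝ} (hu : 0 < u) (hspec : ∀ i, u ≤ hA.eigenvalues i ∧ hA.eigenvalues i ≤ v)
    (k : ℕ) (x y : n) :
    ‖(A⁻¹ * (1 - ((2 / (u + v) : ℝ) : 𝕜) • A) ^ k) x y‖ ≤ u⁻¹ * ((v - u) / (u + v)) ^ k := by
  have hpos i : 0 < hA.eigenvalues i := hu.trans_le (hspec i).1
  rw [hA.inv_mul_one_sub_smul_pow (fun i ↦ (hpos i).ne')]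
  have huv : u ≤ v := (hspec x).1.trans (hspec x).2
  refine (norm_apply_le_l2_opNorm _ x y).trans
    (l2_opNorm_conjStarAlgAut_diagonal_le _ (by bound) fun i ↦ ?_)
  rw [Function.comp_apply, Function.comp_apply, RCLike.norm_ofReal, abs_mul, abs_pow,
    abs_inv, abs_of_pos (hpos i)]
  gcongr
  · exact (hspec i).1
  · exact abs_one_sub_two_div_add_mul_le hu (hspec i).1 (hspec i).2

end Spectral

/-- For banded matrices R of band width r with u ≤ R†R ≤ v (0 < u ≤ v), the entries
of (R†R)⁻¹ decay exponentially, with constants depending only on u, v, r. -/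
theorem banded_inverse_exponential_decay (u v : ℝ) (r : ℕ)
    (hu : 0 < u) (huv : u ≤ v) (hr : 0 < r) :
    ∃ C ρ : ℝ, 0 < C ∧ 0 < ρ ∧
      ∀ (M : ℕ) (R : Matrix (Fin M) (Fin M) ℂ),
        (∀ x y : Fin M, (r : ℤ) < |(x : ℤ) - (y : ℤ)| → R x y = 0) →
        (∀ i : Fin M,
          u ≤ (Matrix.isHermitian_conjTranspose_mul_self R).eigenvalues i ∧
          (Matrix.isHermitian_conjTranspose_mul_self R).eigenvalues i ≤ v) →
        ∀ x y : Fin M,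
          ‖(Rᴴ * R)⁻¹ x y‖ ≤ C * Real.exp (-ρ * ((|(x : ℤ) - (y : ℤ)| : ℤ) : ℝ)) := by
  set q := v / (u + v)
  have hq0 : 0 < q := div_pos (by linarith) (by linarith)
  have hq1 : q < 1 := (div_lt_one (by linarith)).mpr (by linarith)
  refine ⟨u⁻¹, -log q / (2 * r), inv_pos.mpr hu,
    div_pos (neg_pos.mpr (log_neg hq0 hq1)) (by positivity), ?_⟩
  intro M R hR hspec x y
  have hA := isHermitian_conjTranspose_mul_self R
  have hband : (Rᴴ * R).IsBanded (2 * r) := by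
    simpa [two_mul] using (IsBanded.conjTranspose hR).mul hR
  have hinv : (Rᴴ * R)⁻¹ * (Rᴴ * R) = 1 := nonsing_inv_mul _ <| (isUnit_iff_isUnit_det _).mp
    (hA.posDef_iff_eigenvalues_pos.mpr fun i ↦ hu.trans_le (hspec i).1).isUnit
  obtain ⟨k, hk_ge, hk⟩ := exists_nat_div_le_and_sub_one_mul_lt (abs_nonneg ((x : ℤ) - y))
    (by positivity : (0 : ℤ) < 2 * r)
  calc ‖(Rᴴ * R)⁻¹ x y‖
      = ‖((Rᴴ * R)⁻¹ * (1 - ((2 / (u + v) : ℝ) : ℂ) • (Rᴴ * R)) ^ k) x y‖ := by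
        rw [hband.inv_apply_eq_inv_mul_pow_apply (by positivity) hinv _ hk]
    _ ≤ u⁻¹ * ((v - u) / (u + v)) ^ k := hA.norm_inv_mul_pow_apply_le hu hspec k x y
    _ ≤ u⁻¹ * q ^ k := by
        gcongr
        · exact div_nonneg (by linarith) (by linarith)
        · exact div_le_div_of_nonneg_right (by linarith) (by linarith)
    _ ≤ u⁻¹ * exp (-(-log q / (2 * r)) * |(x : ℤ) - y|) := by
        rw [show -(-log q / (2 * r)) * ((|(x : ℤ) - y| : ℤ) : ℝ)
            = log q * (((|(x : ℤ) - y| : ℤ) : ℝ) / ((2 * r : ℤ) : ℝ)) by push_cast; ring]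
        gcongr
        exact pow_le_exp_log_mul hq0 hq1.le hk_ge
end

section
/- For r > 0, the operator R = 1 + (a/2)∇ − r a²∇∇* is bounded above and below: there exist constants 0 < u ≤ v (depending only on r) such that u ≤ R†R ≤ v; in particular R is invertible. For r = 0 the operator 1 + (a/2)∇ has 0 in its spectrum. -/
/-!
Writing `w = e^{iθ}`, the symbol is `g(w) = (1 + w)/2 - r‖w - 1‖²`, a continuous function on the
unit circle. Its imaginary part is `Im w / 2`, so it can only vanish at `w = ±1`, where it equals
`1` and `-4r`. For `r > 0` it therefore has no zero on the compact circle, and `‖g‖` attains a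
positive minimum and a finite maximum there. For `r = 0`, `g(-1) = 0`.
-/

open Complex

theorem IsCompact.exists_pos_le_norm_le {X E : Type*} [TopologicalSpace X] [NormedAddCommGroup E]
    {K : Set X} (hK : IsCompact K) (hne : K.Nonempty) {f : X → E} (hf : ContinuousOn f K)
    (hf0 : ∀ x ∈ K, f x ≠ 0) :
    ∃ u v : ℝ, 0 < u ∧ u ≤ v ∧ ∀ x ∈ K, u ≤ ‖f x‖ ∧ ‖f x‖ ≤ v := by
  obtain ⟨xmin, hxmin, hmin⟩ := hK.exists_isMinOn hne hf.norm
  obtain ⟨xmax, hxmax, hmax⟩ := hK.exists_isMaxOn hne hf.norm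
  exact ⟨‖f xmin‖, ‖f xmax‖, norm_pos_iff.mpr (hf0 xmin hxmin), hmin hxmax,
    fun x hx => ⟨hmin hx, hmax hx⟩⟩

noncomputable def improvedSymbol (r : ℝ) (w : ℂ) : ℂ :=
  1 + (-1 + w) / 2 - (r : ℂ) * ((‖-1 + w‖ : ℝ) : ℂ) ^ 2

theorem continuous_improvedSymbol (r : ℝ) : Continuous (improvedSymbol r) := by
  unfold improvedSymbol
  fun_prop

theorem improvedSymbol_re (r : ℝ) (w : ℂ) :
    (improvedSymbol r w).re = (1 + w.re) / 2 - r * ((w.re - 1) ^ 2 + w.im ^ 2) := by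
  rw [improvedSymbol, ← ofReal_pow, ← normSq_eq_norm_sq, ← ofReal_mul, normSq_apply]
  simp only [sub_re, add_re, add_im, neg_re, neg_im, one_re, one_im, div_ofNat_re, ofReal_re]
  ring

theorem improvedSymbol_im (r : ℝ) (w : ℂ) : (improvedSymbol r w).im = w.im / 2 := by
  rw [improvedSymbol, ← ofReal_pow, ← ofReal_mul]
  simp only [sub_im, add_im, ofReal_im, one_im, div_ofNat_im, neg_im]
  ring

theorem improvedSymbol_ne_zero {r : ℝ} (hr : 0 < r) {w : ℂ} (hw : ‖w‖ = 1) :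
    improvedSymbol r w ≠ 0 := by
  intro h
  have him : w.im = 0 := by
    simpa [improvedSymbol_im] using congrArg im h
  have hre : (1 + w.re) / 2 - r * (w.re - 1) ^ 2 = 0 := by
    simpa [improvedSymbol_re, him] using congrArg re h
  have hunit : w.re ^ 2 = 1 := by
    have hsq : normSq w = 1 := by rw [normSq_eq_norm_sq, hw, one_pow]
    rw [normSq_apply, him] at hsq
    linarith
  rcases sq_eq_one_iff.mp hunit with hre1 | hre1 <;> rw [hre1] at hre <;> nlinarith

/-- The symbol of R = 1 + (a/2)∇ - r a²∇∇* is λ(θ) = 1 + (-1+e^{iθ})/2 - r|-1+e^{iθ}|².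
For r > 0 it is bounded away from 0 and ∞ uniformly in θ, so R is bounded above and
below (hence invertible); for r = 0 one has λ(π) = 0, so 0 lies in the spectrum. -/
theorem improved_operator_bounded_iff (r : ℝ) :
    (0 < r → ∃ u v : ℝ, 0 < u ∧ u ≤ v ∧ ∀ θ : ℝ,
      u ≤ norm ((1 : ℂ) + (-1 + Complex.exp (θ * Complex.I)) / 2
            - (r : ℂ) * ((norm (-1 + Complex.exp (θ * Complex.I)) : ℝ) : ℂ) ^ 2) ∧
      norm ((1 : ℂ) + (-1 + Complex.exp (θ * Complex.I)) / 2
            - (r : ℂ) * ((norm (-1 + Complex.exp (θ * Complex.I)) : ℝ) : ℂ) ^ 2) ≤ v) ∧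
    ((1 : ℂ) + (-1 + Complex.exp ((Real.pi : ℂ) * Complex.I)) / 2 = 0) := by
  refine ⟨fun hr => ?_, by rw [exp_pi_mul_I]; ring⟩
  obtain ⟨u, v, hu, huv, hbounds⟩ := (isCompact_sphere (0 : ℂ) 1).exists_pos_le_norm_le
    (NormedSpace.sphere_nonempty.mpr zero_le_one) (continuous_improvedSymbol r).continuousOn
    (fun w hw => improvedSymbol_ne_zero hr (mem_sphere_zero_iff_norm.mp hw))
  exact ⟨u, v, hu, huv, fun θ =>
    hbounds _ (mem_sphere_zero_iff_norm.mpr (norm_exp_ofReal_mul_I θ))⟩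
end

section
/- If matrices γ₁, γ₂, P₁, P₂ satisfy {γ_μ, γ_ν} = −2δ_{μν}, {P_μ, P_ν} = 2δ_{μν}, {γ_μ, P_ν} = 0, and Δ̃_μ are mutually commuting operators commuting with the γ's and P's, then the square of D̃ = Σ_μ [−(1/2)γ_μ(Δ̃_μ − Δ̃_μᵀ) − (1/2)P_μ(Δ̃_μ + Δ̃_μᵀ)] equals Σ_μ Δ̃_μ Δ̃_μᵀ. -/
private lemma pair_aux {A : Type*} [Ring A] (M N c d : A)
    (h : M * N + N * M = 0) (hcN : Commute c N) (hdM : Commute d M)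
    (hcd : Commute c d) :
    M * c * (N * d) + N * d * (M * c) = 0 := by
  have h1 : M * c * (N * d) = M * N * (c * d) := by
    calc M * c * (N * d) = M * (c * N) * d := by noncomm_ring
      _ = M * (N * c) * d := by rw [hcN.eq]
      _ = M * N * (c * d) := by noncomm_ring
  have h2 : N * d * (M * c) = N * M * (c * d) := by
    calc N * d * (M * c) = N * (d * M) * c := by noncomm_ring
      _ = N * (M * d) * c := by rw [hdM.eq]
      _ = N * M * (d * c) := by noncomm_ring
      _ = N * M * (c * d) := by rw [hcd.eq]
  calc M * c * (N * d) + N * d * (M * c) = (M * N + N * M) * (c * d) := by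
        rw [h1, h2]; noncomm_ring
    _ = 0 := by rw [h, zero_mul]

private lemma sq_aux {A : Type*} [Ring A] [Algebra ℂ A] (g p d dt : A)
    (hgg : g * g = (-1 : ℂ) • (1 : A))
    (hpp : p * p = 1)
    (hgp : g * p + p * g = 0)
    (hgd : Commute g d) (hgdt : Commute g dt)
    (hpd : Commute p d) (hpdt : Commute p dt)
    (hddt : Commute d dt) :
    (g * (d - dt) + p * (d + dt)) * (g * (d - dt) + p * (d + dt))
      = (4 : ℂ) • (d * dt) := by
  set a := d - dt with ha
  set b := d + dt with hb
  have hga : Commute g a := hgd.sub_right hgdt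
  have hgb : Commute g b := hgd.add_right hgdt
  have hpa : Commute p a := hpd.sub_right hpdt
  have hpb : Commute p b := hpd.add_right hpdt
  have hab : Commute a b :=
    ((Commute.refl d).add_right hddt).sub_left (hddt.symm.add_right (Commute.refl dt))
  have hA : g * a * (g * a) = g * g * (a * a) := by
    calc g * a * (g * a) = g * (a * g) * a := by noncomm_ring
      _ = g * (g * a) * a := by rw [hga.symm.eq]
      _ = g * g * (a * a) := by noncomm_ring
  have hC : p * b * (p * b) = p * p * (b * b) := by
    calc p * b * (p * b) = p * (b * p) * b := by noncomm_ring
      _ = p * (p * b) * b := by rw [hpb.symm.eq]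
      _ = p * p * (b * b) := by noncomm_ring
  have hB : g * a * (p * b) + p * b * (g * a) = 0 :=
    pair_aux g p a b hgp hpa.symm.eq hgb.symm.eq hab
  have expand : (g * a + p * b) * (g * a + p * b)
      = g * a * (g * a) + (g * a * (p * b) + p * b * (g * a)) + p * b * (p * b) := by
    noncomm_ring
  rw [expand, hA, hB, hC, hgg, hpp, add_zero, one_mul, smul_mul_assoc, one_mul]
  have hfinal : (-1 : ℂ) • (a * a) + b * b = d * dt + dt * d + (d * dt + dt * d) := by
    rw [neg_one_smul]
    rw [ha, hb]
    noncomm_ring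
  rw [hfinal, show dt * d = d * dt from hddt.eq.symm,
    show (4 : ℂ) • (d * dt) = d * dt + d * dt + (d * dt + d * dt) by
      rw [show (4 : ℂ) = (2 : ℂ) + 2 by norm_num, add_smul, two_smul]]


private lemma cross_aux {A : Type*} [Ring A] (g1 p1 a1 b1 g2 p2 a2 b2 : A)
    (hgg : g1 * g2 + g2 * g1 = 0) (hpp : p1 * p2 + p2 * p1 = 0)
    (hgp : g1 * p2 + p2 * g1 = 0) (hpg : p1 * g2 + g2 * p1 = 0)
    (h1 : Commute a1 g2) (h2 : Commute a1 p2) (h3 : Commute b1 g2)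
    (h4 : Commute b1 p2) (h5 : Commute a2 g1) (h6 : Commute a2 p1)
    (h7 : Commute b2 g1) (h8 : Commute b2 p1)
    (h9 : Commute a1 a2) (h10 : Commute a1 b2) (h11 : Commute b1 a2)
    (h12 : Commute b1 b2) :
    (g1 * a1 + p1 * b1) * (g2 * a2 + p2 * b2)
      + (g2 * a2 + p2 * b2) * (g1 * a1 + p1 * b1) = 0 := by
  have t1 := pair_aux g1 g2 a1 a2 hgg h1 h5 h9
  have t2 := pair_aux g1 p2 a1 b2 hgp h2 h7 h10
  have t3 := pair_aux p1 g2 b1 a2 hpg h3 h6 h11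
  have t4 := pair_aux p1 p2 b1 b2 hpp h4 h8 h12
  have expand : (g1 * a1 + p1 * b1) * (g2 * a2 + p2 * b2)
      + (g2 * a2 + p2 * b2) * (g1 * a1 + p1 * b1)
      = (g1 * a1 * (g2 * a2) + g2 * a2 * (g1 * a1))
        + (g1 * a1 * (p2 * b2) + p2 * b2 * (g1 * a1))
        + (p1 * b1 * (g2 * a2) + g2 * a2 * (p1 * b1))
        + (p1 * b1 * (p2 * b2) + p2 * b2 * (p1 * b1)) := by noncomm_ring
  rw [expand, t1, t2, t3, t4]; simp

/-- If γ_μ, P_μ satisfy the Clifford-type relations {γ_μ,γ_ν} = -2δ_{μν},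
{P_μ,P_ν} = 2δ_{μν}, {γ_μ,P_ν} = 0, and the Δ̃_μ, Δ̃_μᵀ are mutually commuting
operators commuting with the γ's and P's, then
D̃ = Σ_μ [-(1/2)γ_μ(Δ̃_μ - Δ̃_μᵀ) - (1/2)P_μ(Δ̃_μ + Δ̃_μᵀ)] satisfies D̃² = Σ_μ Δ̃_μ Δ̃_μᵀ. -/
theorem dirac_operator_square {A : Type*} [Ring A] [Algebra ℂ A]
    (γ P D Dt : Fin 2 → A)
    (hγ : ∀ μ ν, γ μ * γ ν + γ ν * γ μ = if μ = ν then (-2 : ℂ) • (1 : A) else 0)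
    (hP : ∀ μ ν, P μ * P ν + P ν * P μ = if μ = ν then (2 : ℂ) • (1 : A) else 0)
    (hγP : ∀ μ ν, γ μ * P ν + P ν * γ μ = 0)
    (hDD : ∀ μ ν, Commute (D μ) (D ν))
    (hDtDt : ∀ μ ν, Commute (Dt μ) (Dt ν))
    (hDDt : ∀ μ ν, Commute (D μ) (Dt ν))
    (hγD : ∀ μ ν, Commute (γ μ) (D ν)) (hγDt : ∀ μ ν, Commute (γ μ) (Dt ν))
    (hPD : ∀ μ ν, Commute (P μ) (D ν)) (hPDt : ∀ μ ν, Commute (P μ) (Dt ν)) :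
    (∑ μ : Fin 2, ((-(1 / 2 : ℂ)) • (γ μ * (D μ - Dt μ))
        + (-(1 / 2 : ℂ)) • (P μ * (D μ + Dt μ)))) ^ 2
      = ∑ μ : Fin 2, D μ * Dt μ := by
  have hγsq : ∀ μ, γ μ * γ μ = (-1 : ℂ) • (1 : A) := by
    intro μ
    have h := hγ μ μ
    simp only [eq_self_iff_true, if_true] at h
    calc γ μ * γ μ = ((1/2 : ℂ)) • ((2 : ℂ) • (γ μ * γ μ)) := by
          rw [smul_smul]; norm_num
      _ = (1/2 : ℂ) • (γ μ * γ μ + γ μ * γ μ) := by rw [two_smul]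
      _ = (1/2 : ℂ) • ((-2 : ℂ) • (1 : A)) := by rw [h]
      _ = (-1 : ℂ) • 1 := by rw [smul_smul]; norm_num
  have hPsq : ∀ μ, P μ * P μ = (1 : A) := by
    intro μ
    have h := hP μ μ
    simp only [eq_self_iff_true, if_true] at h
    calc P μ * P μ = ((1/2 : ℂ)) • ((2 : ℂ) • (P μ * P μ)) := by
          rw [smul_smul]; norm_num
      _ = (1/2 : ℂ) • (P μ * P μ + P μ * P μ) := by rw [two_smul]
      _ = (1/2 : ℂ) • ((2 : ℂ) • (1 : A)) := by rw [h]
      _ = (1 : A) := by rw [smul_smul]; norm_num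
  have hsq0 := sq_aux (γ 0) (P 0) (D 0) (Dt 0) (hγsq 0) (hPsq 0) (hγP 0 0)
    (hγD 0 0) (hγDt 0 0) (hPD 0 0) (hPDt 0 0) (hDDt 0 0)
  have hsq1 := sq_aux (γ 1) (P 1) (D 1) (Dt 1) (hγsq 1) (hPsq 1) (hγP 1 1)
    (hγD 1 1) (hγDt 1 1) (hPD 1 1) (hPDt 1 1) (hDDt 1 1)
  have hcross := cross_aux (γ 0) (P 0) (D 0 - Dt 0) (D 0 + Dt 0)
      (γ 1) (P 1) (D 1 - Dt 1) (D 1 + Dt 1)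
    (by simpa using hγ 0 1) (by simpa using hP 0 1) (hγP 0 1)
    (by rw [add_comm]; exact hγP 1 0)
    (((hγD 1 0).symm).sub_left ((hγDt 1 0).symm))
    (((hPD 1 0).symm).sub_left ((hPDt 1 0).symm))
    (((hγD 1 0).symm).add_left ((hγDt 1 0).symm))
    (((hPD 1 0).symm).add_left ((hPDt 1 0).symm))
    (((hγD 0 1).symm).sub_left ((hγDt 0 1).symm))
    (((hPD 0 1).symm).sub_left ((hPDt 0 1).symm))
    (((hγD 0 1).symm).add_left ((hγDt 0 1).symm))
    (((hPD 0 1).symm).add_left ((hPDt 0 1).symm))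
    (((hDD 0 1).sub_left ((hDDt 1 0).symm)).sub_right
      (((hDDt 0 1).sub_left (hDtDt 0 1))))
    (((hDD 0 1).sub_left ((hDDt 1 0).symm)).add_right
      (((hDDt 0 1).sub_left (hDtDt 0 1))))
    (((hDD 0 1).add_left ((hDDt 1 0).symm)).sub_right
      (((hDDt 0 1).add_left (hDtDt 0 1))))
    (((hDD 0 1).add_left ((hDDt 1 0).symm)).add_right
      (((hDDt 0 1).add_left (hDtDt 0 1))))
  simp only [Fin.sum_univ_two]
  set X0 := γ 0 * (D 0 - Dt 0) + P 0 * (D 0 + Dt 0) with hX0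
  set X1 := γ 1 * (D 1 - Dt 1) + P 1 * (D 1 + Dt 1) with hX1
  have hbase : (-(1 / 2 : ℂ)) • (γ 0 * (D 0 - Dt 0))
        + (-(1 / 2 : ℂ)) • (P 0 * (D 0 + Dt 0))
        + ((-(1 / 2 : ℂ)) • (γ 1 * (D 1 - Dt 1))
        + (-(1 / 2 : ℂ)) • (P 1 * (D 1 + Dt 1)))
      = (-(1 / 2 : ℂ)) • (X0 + X1) := by
    rw [hX0, hX1]; module
  rw [hbase, pow_two, smul_mul_smul_comm]
  have hss : (X0 + X1) * (X0 + X1)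
      = (4 : ℂ) • (D 0 * Dt 0) + (4 : ℂ) • (D 1 * Dt 1) := by
    have expand : (X0 + X1) * (X0 + X1)
        = X0 * X0 + (X0 * X1 + X1 * X0) + X1 * X1 := by noncomm_ring
    rw [expand, hX0, hX1, hsq0, hsq1, hcross, add_zero]
  rw [hss, smul_add, smul_smul, smul_smul]
  norm_num
end

section
/- In Fourier space, the improved Dirac operator zero condition: D̃² = Σ_μ Δ̃_μ Δ̃_μᵀ with Δ̃_μ = R_μ^{-1}Δ_μ and R_μ invertible vanishes on a momentum mode only when all free forward difference operators Δ_μ vanish, i.e., only at zero momentum; hence there are no fermion doublers. -/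
open Complex Real

theorem Finset.eq_zero_of_sum_norm_sq_eq_zero {ι E : Type*} [NormedAddCommGroup E]
    {s : Finset ι} {f : ι → E} (h : ∑ i ∈ s, ‖f i‖ ^ 2 = 0) {i : ι} (hi : i ∈ s) : f i = 0 :=
  norm_eq_zero.mp <| (pow_eq_zero_iff two_ne_zero).mp <|
    (Finset.sum_eq_zero_iff_of_nonneg fun j _ => sq_nonneg ‖f j‖).mp h i hi

theorem Complex.exp_I_mul_ofReal_eq_one_iff {x : ℝ} :
    exp (I * x) = 1 ↔ ∃ m : ℤ, x = 2 * π * m := by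
  simp only [exp_eq_one_iff, ← mul_assoc, mul_comm I, ← ofReal_intCast, ← ofReal_ofNat,
    ← ofReal_mul, mul_left_inj' I_ne_zero, ofReal_inj]
  simp only [mul_comm, mul_left_comm]

/-- The eigenvalue of the improved difference `R_μ⁻¹ Δ_μ` on the plane wave of momentum `p`. -/
noncomputable def improvedDifferenceSymbol (a : ℝ) (R : ℂ) (p : ℝ) : ℂ :=
  R⁻¹ * ((exp (I * (a * p)) - 1) / a)

theorem improvedDifferenceSymbol_eq_zero_iff {a : ℝ} {R : ℂ} (ha : a ≠ 0) (hR : R ≠ 0)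
    {p : ℝ} : improvedDifferenceSymbol a R p = 0 ↔ exp (I * (a * p)) = 1 := by
  simp [improvedDifferenceSymbol, hR, ha, sub_eq_zero]

theorem exists_int_eq_two_pi_mul_div_of_exp_eq_one {a p : ℝ} (ha : a ≠ 0)
    (h : exp (I * (a * p)) = 1) : ∃ m : ℤ, p = 2 * π * m / a := by
  obtain ⟨m, hm⟩ := (exp_I_mul_ofReal_eq_one_iff (x := a * p)).mp
    (by push_cast; exact h)
  exact ⟨m, by rw [← hm]; field_simp⟩

theorem no_fermion_doublers_general (a : ℝ) (ha : 0 < a)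
    (p : Fin 2 → ℝ)
    (R : Fin 2 → ℂ) (hR : ∀ μ, R μ ≠ 0)
    (hzero : ∑ μ : Fin 2,
        (‖(R μ)⁻¹ * ((Complex.exp (Complex.I * (a * p μ)) - 1) / (a : ℂ))‖) ^ 2
      = 0) :
    ∀ μ, Complex.exp (Complex.I * (a * p μ)) = 1 ∧
      ∃ m : ℤ, p μ = 2 * Real.pi * (m : ℝ) / a := by
  intro μ
  have hsymbol : improvedDifferenceSymbol a (R μ) (p μ) = 0 :=
    Finset.eq_zero_of_sum_norm_sq_eq_zero (f := fun ν => improvedDifferenceSymbol a (R ν) (p ν))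
      hzero (Finset.mem_univ μ)
  have hexp := (improvedDifferenceSymbol_eq_zero_iff ha.ne' (hR μ)).mp hsymbol
  exact ⟨hexp, exists_int_eq_two_pi_mul_div_of_exp_eq_one ha.ne' hexp⟩

/-- In momentum space, Δ_μ acts as multiplication by (e^{iap_μ} - 1)/a and the improved
Dirac operator satisfies D̃² = Σ_μ |R_μ⁻¹ (e^{iap_μ}-1)/a|² with R_μ invertible; so D̃²
vanishes on a momentum mode only when e^{iap_μ} = 1 for both μ, i.e. only at zero momentum
(mod 2π/a): there are no fermion doublers. -/
theorem no_fermion_doublers (a : ℝ) (ha : 0 < a) (Lc : ℕ) (hL : 0 < Lc)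
    (k : Fin 2 → ℤ) (p : Fin 2 → ℝ)
    (hp : ∀ μ, p μ = 2 * Real.pi * (k μ : ℝ) / (a * (Lc : ℝ)))
    (R : Fin 2 → ℂ) (hR : ∀ μ, R μ ≠ 0)
    (hzero : ∑ μ : Fin 2,
        (‖(R μ)⁻¹ * ((Complex.exp (Complex.I * (a * p μ)) - 1) / (a : ℂ))‖) ^ 2
      = 0) :
    ∀ μ, Complex.exp (Complex.I * (a * p μ)) = 1 ∧
      ∃ m : ℤ, p μ = 2 * Real.pi * (m : ℝ) / a :=
  no_fermion_doublers_general a ha p R hR hzero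
end
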